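/- arXiv:2009.07179 — 7 statements merged into one kernel-verified Lean document; each statement's English description precedes it below -/
import Mathlib

section
/- Let σ : ℝ → ℝ be a twice continuously differentiable function with σ(t) > 0 for all t. Then σ satisfies the differential equation 2 σ(t) σ''(t) = σ'(t)² + 1/4 for all t ∈ ℝ if and only if there exist a real constant C > 0 and t₀ ∈ ℝ such that σ(t) = (t − t₀)²/(16C) + C for all t ∈ ℝ. -/
/-!
Along a positive solution of `2 σ σ'' = σ'² + κ` the quantity `(σ'² + κ) / σ` is a first
integral: its derivative is `σ' (2 σ σ'' - σ'² - κ) / σ²`. Since it equals `2 σ''`, the second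
derivative is constant and `σ` is a quadratic `a t² + b t + c`. For a quadratic the equation
reduces to the single identity `b² - 4 a c = -κ`, and with `κ = 1/4` and `σ(0) = c > 0` this
forces `a > 0`; completing the square gives `σ(t) = (t - t₀)² / (16 C) + C` with `C = 1 / (16 a)`.
-/

theorem eq_of_deriv_eq {G : Type*} [NormedAddCommGroup G] [NormedSpace ℝ G] {f g : ℝ → G}
    (hf : Differentiable ℝ f) (hg : Differentiable ℝ g) (hfg : ∀ x, deriv f x = deriv g x)
    (x : ℝ) (hx : f x = g x) : f = g :=
  eq_of_fderiv_eq hf hg (fun y => ContinuousLinearMap.ext_ring (by simpa using hfg y)) x hx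

theorem hasDerivAt_quadratic (a b c t : ℝ) :
    HasDerivAt (fun t => a * t ^ 2 + b * t + c) (2 * a * t + b) t := by
  refine ((((hasDerivAt_pow 2 t).const_mul a).add
    ((hasDerivAt_id t).const_mul b)).add_const c).congr_deriv ?_
  norm_num
  ring

theorem deriv_quadratic (a b c : ℝ) :
    deriv (fun t => a * t ^ 2 + b * t + c) = fun t => 2 * a * t + b :=
  funext fun t => (hasDerivAt_quadratic a b c t).deriv

theorem deriv_deriv_quadratic (a b c : ℝ) :
    deriv (deriv fun t => a * t ^ 2 + b * t + c) = fun _ => 2 * a := by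
  rw [deriv_quadratic]
  funext t
  simp

theorem eq_quadratic_of_deriv_deriv_eq {σ : ℝ → ℝ} (a : ℝ) (hσ : Differentiable ℝ σ)
    (hσ' : Differentiable ℝ (deriv σ)) (h : ∀ t, deriv (deriv σ) t = 2 * a) :
    σ = fun t => a * t ^ 2 + deriv σ 0 * t + σ 0 := by
  have hderiv : deriv σ = fun t => 2 * a * t + deriv σ 0 :=
    eq_of_deriv_eq hσ' (by fun_prop) (fun t => by simp [h t]) 0 (by simp)
  refine eq_of_deriv_eq hσ (by fun_prop) (fun t => ?_) 0 (by simp)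
  rw [deriv_quadratic]
  exact congrFun hderiv t

theorem deriv_deriv_eq_of_ode {σ : ℝ → ℝ} {κ : ℝ} (hσ : Differentiable ℝ σ)
    (hσ' : Differentiable ℝ (deriv σ)) (hne : ∀ t, σ t ≠ 0)
    (hode : ∀ t, 2 * σ t * deriv (deriv σ) t = deriv σ t ^ 2 + κ) (t : ℝ) :
    deriv (deriv σ) t = deriv (deriv σ) 0 := by
  set F := fun t => (deriv σ t ^ 2 + κ) / σ t
  have hF : ∀ s, HasDerivAt F 0 s := by
    intro s
    refine ((((hσ' s).hasDerivAt.pow 2).add_const κ).div (hσ s).hasDerivAt (hne s)).congr_deriv ?_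
    rw [div_eq_zero_iff, Pi.pow_apply]
    left
    norm_num
    linear_combination deriv σ s * hode s
  have hF_const : F t = F 0 :=
    is_const_of_deriv_eq_zero (fun s => (hF s).differentiableAt) (fun s => (hF s).deriv) t 0
  have hσ'' : ∀ s, deriv (deriv σ) s = F s / 2 := by
    intro s
    simp only [F]
    field_simp [hne s]
    linear_combination hode s
  rw [hσ'' t, hσ'' 0, hF_const]

theorem ode_iff_discrim_eq {σ : ℝ → ℝ} {κ a b c : ℝ}
    (hσ : σ = fun t => a * t ^ 2 + b * t + c) :
    (∀ t, 2 * σ t * deriv (deriv σ) t = deriv σ t ^ 2 + κ) ↔ discrim a b c = -κ := by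
  subst hσ
  simp only [deriv_deriv_quadratic]
  simp only [deriv_quadratic, discrim]
  constructor
  · intro h
    linear_combination -h 0
  · intro h t
    linear_combination -h

theorem pos_of_discrim_eq_neg {a b c κ : ℝ} (hκ : 0 < κ) (hc : 0 < c)
    (hd : discrim a b c = -κ) : 0 < a := by
  rw [discrim] at hd
  nlinarith [sq_nonneg b]

theorem exists_vertex_form_of_discrim_eq {a b c : ℝ} (ha : 0 < a)
    (hd : discrim a b c = -(1 / 4)) :
    ∃ C, 0 < C ∧ ∃ t₀, ∀ t, a * t ^ 2 + b * t + c = (t - t₀) ^ 2 / (16 * C) + C := by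
  refine ⟨1 / (16 * a), by positivity, -b / (2 * a), fun t => ?_⟩
  have hc : c = (b ^ 2 + 1 / 4) / (4 * a) := by
    rw [discrim] at hd
    field_simp
    linarith
  rw [hc]
  field_simp
  ring

theorem vertex_form_eq_quadratic {C : ℝ} (hC : C ≠ 0) (t₀ : ℝ) :
    (fun t => (t - t₀) ^ 2 / (16 * C) + C) =
      fun t => 1 / (16 * C) * t ^ 2 + -t₀ / (8 * C) * t + (t₀ ^ 2 / (16 * C) + C) := by
  funext t
  field_simp
  ring

theorem discrim_vertex_form {C : ℝ} (hC : C ≠ 0) (t₀ : ℝ) :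
    discrim (1 / (16 * C)) (-t₀ / (8 * C)) (t₀ ^ 2 / (16 * C) + C) = -(1 / 4) := by
  rw [discrim]
  field_simp
  ring

/-- Characterization (proof of Theorem 4.2) of the positive solutions of the ODE
`2 σ σ'' = (σ')² + 1/4`: they are exactly the functions `σ(t) = (t−t₀)²/(16C) + C`
with `C > 0`. -/
theorem stmt1 (σ : ℝ → ℝ) (hσ : ContDiff ℝ 2 σ) (hpos : ∀ t : ℝ, 0 < σ t) :
    (∀ t : ℝ, 2 * σ t * deriv (deriv σ) t = (deriv σ t) ^ 2 + 1 / 4) ↔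
      ∃ C : ℝ, 0 < C ∧ ∃ t₀ : ℝ, ∀ t : ℝ, σ t = (t - t₀) ^ 2 / (16 * C) + C := by
  constructor
  · intro hode
    have hd : Differentiable ℝ σ := hσ.differentiable (by norm_num)
    have hd' : Differentiable ℝ (deriv σ) :=
      ((contDiff_succ_iff_deriv (n := 1)).mp hσ).2.2.differentiable one_ne_zero
    obtain ⟨a, b, c, rfl⟩ : ∃ a b c : ℝ, σ = fun t => a * t ^ 2 + b * t + c :=
      ⟨_, _, _, eq_quadratic_of_deriv_deriv_eq (deriv (deriv σ) 0 / 2) hd hd' fun t => by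
        rw [deriv_deriv_eq_of_ode hd hd' (fun t => (hpos t).ne') hode t]; ring⟩
    have hdisc : discrim a b c = -(1 / 4) := (ode_iff_discrim_eq rfl).mp hode
    have ha : 0 < a := pos_of_discrim_eq_neg (by norm_num) (by simpa using hpos 0) hdisc
    exact exists_vertex_form_of_discrim_eq ha hdisc
  · rintro ⟨C, hC, t₀, h⟩
    rw [ode_iff_discrim_eq ((funext h).trans (vertex_form_eq_quadratic hC.ne' t₀))]
    exact discrim_vertex_form hC.ne' t₀
end

section
/- Let n ≥ 4 be a natural number and let Λ, Λ₀, B, C be real constants with C > 0. Define σ(t) = t²/(16C) + C for t ∈ ℝ, and for t > 0 define β(t) = t · (t² + 16C²)^{−(n−2)/2} · ( B − ∫₁^t (16C² + s²)^{(n−2)/2} · (16C·Λ₀ − Λ·(16C² + s²)) / (4s²) ds ). Then β is differentiable on (0, ∞) and for every t > 0 one has 2 β'(t) σ'(t) + 2 β(t) · ( (n−4) σ'(t)²/(2σ(t)) − 1/(4σ(t)) + σ''(t) ) − σ(t) Λ + Λ₀ = 0. -/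
/-!
Write `β = w · R` with `w t = t (t² + 16C²)^(-p)`, `p = (n - 2)/2`, and `R t = B - ∫₁ᵗ g`.
The weight `w` solves the homogeneous equation `σ' w' + Q w = 0`, where `Q` is the bracket
multiplying `2β`, so the terms containing `R` cancel. What remains is `-2 σ' w g + Λ₀ - σΛ`,
and the integrand `g` is exactly the one for which `2 σ' w g = Λ₀ - σΛ`.
-/

open Set

theorem hasDerivAt_integral_of_continuousOn {E : Type*} [NormedAddCommGroup E]
    [NormedSpace ℝ E] [CompleteSpace E] {g : ℝ → E} {s : Set ℝ} {a t : ℝ}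
    (hg : ContinuousOn g s) (hs : IsOpen s) (hat : uIcc a t ⊆ s) :
    HasDerivAt (fun x => ∫ y in a..x, g y) (g t) t :=
  have hts : t ∈ s := hat right_mem_uIcc
  intervalIntegral.integral_hasDerivAt_right (hg.mono hat).intervalIntegrable
    (hg.stronglyMeasurableAtFilter hs t hts) (hg.continuousAt (hs.mem_nhds hts))

theorem hasDerivAt_mul_rpow_neg_sq_add {k p t : ℝ} (ht : t ^ 2 + k ≠ 0) :
    HasDerivAt (fun x => x * (x ^ 2 + k) ^ (-p))
      ((t ^ 2 + k) ^ (-p) * (1 - 2 * p * t ^ 2 / (t ^ 2 + k))) t := by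
  have hsq : HasDerivAt (fun x => x ^ 2 + k) (2 * t) t := by
    simpa using (hasDerivAt_pow 2 t).add_const k
  refine ((hasDerivAt_id t).mul (hsq.rpow_const (p := -p) (Or.inl ht))).congr_deriv ?_
  rw [Real.rpow_sub_one ht, id]
  field_simp
  ring

theorem deriv_sq_div_add_const (a c : ℝ) :
    deriv (fun x : ℝ => x ^ 2 / a + c) = fun x => 2 * x / a := by
  funext x
  simp

theorem taubNut_weight_homogeneous {C : ℝ} (hC : 0 < C) (n t : ℝ) :
    2 * t / (16 * C) * (1 - 2 * ((n - 2) / 2) * t ^ 2 / (t ^ 2 + 16 * C ^ 2))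
      + t * ((n - 4) * (2 * t / (16 * C)) ^ 2 / (2 * (t ^ 2 / (16 * C) + C))
        - 1 / (4 * (t ^ 2 / (16 * C) + C)) + 2 / (16 * C)) = 0 := by
  field_simp
  ring

theorem taubNut_integrand_particular {C t : ℝ} (hC : C ≠ 0) (ht : t ≠ 0) (p Λ Λ₀ : ℝ) :
    2 * (2 * t / (16 * C)) * (t * (t ^ 2 + 16 * C ^ 2) ^ (-p) *
      ((16 * C ^ 2 + t ^ 2) ^ p * (16 * C * Λ₀ - Λ * (16 * C ^ 2 + t ^ 2)) / (4 * t ^ 2)))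
      = Λ₀ - (t ^ 2 / (16 * C) + C) * Λ := by
  have hu : 0 < 16 * C ^ 2 + t ^ 2 := by positivity
  have hE := (Real.rpow_pos_of_pos hu p).ne'
  rw [add_comm (t ^ 2), Real.rpow_neg hu.le]
  generalize (16 * C ^ 2 + t ^ 2) ^ p = E at hE ⊢
  field_simp
  ring

theorem stmt2_general (n : ℕ) (Λ Λ₀ B C : ℝ) (hC : 0 < C)
    (σ β : ℝ → ℝ)
    (hσ : ∀ t : ℝ, σ t = t ^ 2 / (16 * C) + C)
    (hβ : ∀ t : ℝ, 0 < t →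
      β t = t * (t ^ 2 + 16 * C ^ 2) ^ (-(((n : ℝ) - 2) / 2)) *
        (B - ∫ s in (1 : ℝ)..t,
          (16 * C ^ 2 + s ^ 2) ^ (((n : ℝ) - 2) / 2) *
            (16 * C * Λ₀ - Λ * (16 * C ^ 2 + s ^ 2)) / (4 * s ^ 2))) :
    ∀ t : ℝ, 0 < t →
      DifferentiableAt ℝ β t ∧
      2 * deriv β t * deriv σ t
          + 2 * β t * (((n : ℝ) - 4) * (deriv σ t) ^ 2 / (2 * σ t)
              - 1 / (4 * σ t) + deriv (deriv σ) t)
          - σ t * Λ + Λ₀ = 0 := by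
  intro t ht
  have hσ' : deriv σ = fun x => 2 * x / (16 * C) := by
    rw [funext hσ, deriv_sq_div_add_const]
  have hσ'' : deriv (deriv σ) t = 2 / (16 * C) := by
    simp [hσ']
  have hg : ContinuousOn (fun s : ℝ => (16 * C ^ 2 + s ^ 2) ^ (((n : ℝ) - 2) / 2) *
      (16 * C * Λ₀ - Λ * (16 * C ^ 2 + s ^ 2)) / (4 * s ^ 2)) (Ioi 0) := by
    fun_prop (disch := intro x hx; have : (0 : ℝ) < x := hx; positivity)
  have h1t : uIcc 1 t ⊆ Ioi 0 := fun x hx => lt_of_lt_of_le (lt_min one_pos ht) hx.1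
  have hβ' := ((hasDerivAt_mul_rpow_neg_sq_add (k := 16 * C ^ 2) (p := ((n : ℝ) - 2) / 2)
    (by positivity)).mul ((hasDerivAt_integral_of_continuousOn hg isOpen_Ioi h1t).const_sub B))
    |>.congr_of_eventuallyEq (eventually_gt_nhds ht |>.mono hβ)
  refine ⟨hβ'.differentiableAt, ?_⟩
  rw [hβ'.deriv, hσ'', hσ', hσ t, hβ t ht]
  beta_reduce
  linear_combination
    2 * (t ^ 2 + 16 * C ^ 2) ^ (-(((n : ℝ) - 2) / 2)) * (B - ∫ s in (1 : ℝ)..t,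
      (16 * C ^ 2 + s ^ 2) ^ (((n : ℝ) - 2) / 2) *
        (16 * C * Λ₀ - Λ * (16 * C ^ 2 + s ^ 2)) / (4 * s ^ 2)) *
      taubNut_weight_homogeneous hC n t
    - taubNut_integrand_particular hC.ne' ht.ne' (((n : ℝ) - 2) / 2) Λ Λ₀

/-- Verification (proof of Theorem 4.2) that the function `β̃` of formula (4.2)
solves the ODE (4.27) with `σ(t) = t²/(16C) + C` on `(0, ∞)`. -/
theorem stmt2 (n : ℕ) (hn : 4 ≤ n) (Λ Λ₀ B C : ℝ) (hC : 0 < C)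
    (σ β : ℝ → ℝ)
    (hσ : ∀ t : ℝ, σ t = t ^ 2 / (16 * C) + C)
    (hβ : ∀ t : ℝ, 0 < t →
      β t = t * (t ^ 2 + 16 * C ^ 2) ^ (-(((n : ℝ) - 2) / 2)) *
        (B - ∫ s in (1 : ℝ)..t,
          (16 * C ^ 2 + s ^ 2) ^ (((n : ℝ) - 2) / 2) *
            (16 * C * Λ₀ - Λ * (16 * C ^ 2 + s ^ 2)) / (4 * s ^ 2))) :
    ∀ t : ℝ, 0 < t →
      DifferentiableAt ℝ β t ∧
      2 * deriv β t * deriv σ t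
          + 2 * β t * (((n : ℝ) - 4) * (deriv σ t) ^ 2 / (2 * σ t)
              - 1 / (4 * σ t) + deriv (deriv σ) t)
          - σ t * Λ + Λ₀ = 0 :=
  stmt2_general n Λ Λ₀ B C hC σ β hσ hβ
end

section
/- Let n ≥ 4 be an even natural number and let Λ, Λ₀, B, C be real constants with C > 0. Let β : (0, ∞) → ℝ be defined by β(t) = t · (t² + 16C²)^{−(n−2)/2} · ( B − ∫₁^t (16C² + s²)^{(n−2)/2} · (16C·Λ₀ − Λ·(16C² + s²)) / (4s²) ds ). Then there exists a polynomial P with real coefficients such that β(t) = P(t)/(t² + 16C²)^{(n−2)/2} for all t > 0; in particular β extends to a C^∞ function defined on all of ℝ. -/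
open Polynomial

/-- Termwise antiderivative: `antider v` has derivative `v.comp (X^2)`. -/
noncomputable def antider (v : Polynomial ℝ) : Polynomial ℝ :=
  v.sum fun j a => Polynomial.C (a / (2 * j + 1)) * Polynomial.X ^ (2 * j + 1)

lemma antider_deriv (v : Polynomial ℝ) :
    Polynomial.derivative (antider v) = v.comp (Polynomial.X ^ 2) := by
  rw [antider, Polynomial.comp_eq_sum_left, Polynomial.sum_def, Polynomial.sum_def,
    map_sum]
  refine Finset.sum_congr rfl fun j hj => ?_
  rw [Polynomial.derivative_C_mul_X_pow]
  have h1 : ((2 * j + 1 : ℕ) : ℝ) ≠ 0 := by positivity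
  have : v.coeff j / (2 * j + 1) * ((2 * j + 1 : ℕ) : ℝ) = v.coeff j := by
    push_cast
    field_simp
  rw [this, Nat.add_sub_cancel, pow_mul]

lemma contDiff_eval (p : Polynomial ℝ) : ContDiff ℝ (⊤ : ℕ∞) fun x : ℝ => p.eval x := by
  induction p using Polynomial.induction_on' with
  | add p q hp hq => simpa using hp.add hq
  | monomial n a =>
      simpa [Polynomial.eval_monomial] using
        (contDiff_const (c := a)).mul (contDiff_id.pow n)

/-- Explicit antiderivative of `s ↦ u.eval (s²) / s²` away from `0`. -/
noncomputable def anti (u : Polynomial ℝ) : ℝ → ℝ :=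
  fun s => -u.coeff 0 / s + (antider u.divX).eval s

lemma eval_divX (u : Polynomial ℝ) (x : ℝ) :
    u.eval x = u.divX.eval x * x + u.coeff 0 := by
  conv_lhs => rw [← u.divX_mul_X_add]
  simp

lemma anti_hasDerivAt (u : Polynomial ℝ) {s : ℝ} (hs : s ≠ 0) :
    HasDerivAt (anti u) (u.eval (s ^ 2) / s ^ 2) s := by
  have h1 : HasDerivAt (fun x : ℝ => -u.coeff 0 / x) (u.coeff 0 / s ^ 2) s := by
    have h := (hasDerivAt_inv hs).const_mul (-u.coeff 0)
    have h2 : -u.coeff 0 * -(s ^ 2)⁻¹ = u.coeff 0 / s ^ 2 := by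
      field_simp
    rw [h2] at h
    simpa [div_eq_mul_inv] using h
  have h2 : HasDerivAt (fun x : ℝ => (antider u.divX).eval x)
      ((Polynomial.derivative (antider u.divX)).eval s) s :=
    (antider u.divX).hasDerivAt s
  have h3 := h1.add h2
  have h4 : u.coeff 0 / s ^ 2 + (Polynomial.derivative (antider u.divX)).eval s
      = u.eval (s ^ 2) / s ^ 2 := by
    rw [antider_deriv, Polynomial.eval_comp, eval_divX u (s ^ 2)]
    have hs2 : (s : ℝ) ^ 2 ≠ 0 := pow_ne_zero 2 hs
    simp only [Polynomial.eval_pow, Polynomial.eval_X]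
    field_simp
    ring
  rw [← h4]
  exact h3

lemma integral_eq (u : Polynomial ℝ) {t : ℝ} (ht : 0 < t) :
    ∫ s in (1 : ℝ)..t, u.eval (s ^ 2) / s ^ 2 = anti u t - anti u 1 := by
  have hpos : ∀ s ∈ Set.uIcc (1 : ℝ) t, 0 < s := by
    intro s hs
    have h1 : min 1 t ≤ s := hs.1
    have : (0 : ℝ) < min 1 t := lt_min one_pos ht
    linarith
  apply intervalIntegral.integral_eq_sub_of_hasDerivAt
  · intro s hs
    exact anti_hasDerivAt u (ne_of_gt (hpos s hs))
  · apply ContinuousOn.intervalIntegrable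
    apply ContinuousOn.div
    · exact ((u.continuous_aeval.comp (continuous_pow 2)).continuousOn).congr
        (fun s _ => by simp)
    · exact (continuous_pow 2).continuousOn
    · intro s hs
      exact pow_ne_zero 2 (ne_of_gt (hpos s hs))

/-- Theorem 4.2: for even `n ≥ 4` the function `β̃` of formula (4.2) is a rational
function `P(t)/(t² + 16C²)^{(n−2)/2}` and admits a smooth extension over all of `ℝ`. -/
theorem stmt3 (n : ℕ) (hn : 4 ≤ n) (hn_even : Even n) (Λ Λ₀ B C : ℝ) (hC : 0 < C)
    (β : ℝ → ℝ)
    (hβ : ∀ t : ℝ, 0 < t →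
      β t = t * (t ^ 2 + 16 * C ^ 2) ^ (-(((n : ℝ) - 2) / 2)) *
        (B - ∫ s in (1 : ℝ)..t,
          (16 * C ^ 2 + s ^ 2) ^ (((n : ℝ) - 2) / 2) *
            (16 * C * Λ₀ - Λ * (16 * C ^ 2 + s ^ 2)) / (4 * s ^ 2))) :
    (∃ P : Polynomial ℝ, ∀ t : ℝ, 0 < t →
        β t = P.eval t / (t ^ 2 + 16 * C ^ 2) ^ (((n : ℝ) - 2) / 2)) ∧
    ∃ g : ℝ → ℝ, ContDiff ℝ (⊤ : ℕ∞) g ∧ ∀ t : ℝ, 0 < t → g t = β t := by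
  obtain ⟨k, hk⟩ := hn_even
  have hk2 : 2 ≤ k := by omega
  set m : ℕ := k - 1 with hmdef
  have hm : ((n : ℝ) - 2) / 2 = (m : ℝ) := by
    have : (m : ℝ) = (k : ℝ) - 1 := by
      rw [hmdef]
      push_cast [Nat.cast_sub (by omega : 1 ≤ k)]
      ring
    rw [this, hk]
    push_cast
    ring
  set u : Polynomial ℝ := Polynomial.C (1/4) *
    ((Polynomial.C (16 * C ^ 2) + Polynomial.X) ^ m *
      (Polynomial.C (16 * C * Λ₀) - Polynomial.C Λ *
        (Polynomial.C (16 * C ^ 2) + Polynomial.X))) with hudef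
  have hu : ∀ x : ℝ, u.eval x =
      (16 * C ^ 2 + x) ^ m * (16 * C * Λ₀ - Λ * (16 * C ^ 2 + x)) / 4 := by
    intro x
    simp [hudef]
    ring
  have hint : ∀ s : ℝ,
      (16 * C ^ 2 + s ^ 2) ^ (((n : ℝ) - 2) / 2) *
        (16 * C * Λ₀ - Λ * (16 * C ^ 2 + s ^ 2)) / (4 * s ^ 2)
      = u.eval (s ^ 2) / s ^ 2 := by
    intro s
    rw [hm, Real.rpow_natCast, hu, div_div]
  set P : Polynomial ℝ := Polynomial.C (B + anti u 1) * Polynomial.X +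
    Polynomial.C (u.coeff 0) - Polynomial.X * antider u.divX with hPdef
  have main : ∀ t : ℝ, 0 < t →
      β t = P.eval t / (t ^ 2 + 16 * C ^ 2) ^ m := by
    intro t ht
    have hpos : (0 : ℝ) < t ^ 2 + 16 * C ^ 2 := by positivity
    rw [hβ t ht]
    simp only [hint]
    rw [integral_eq u ht, hm, Real.rpow_neg hpos.le, Real.rpow_natCast]
    simp only [anti, hPdef, Polynomial.eval_sub, Polynomial.eval_add,
      Polynomial.eval_mul, Polynomial.eval_C, Polynomial.eval_X]
    have htne : t ≠ 0 := ht.ne'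
    have hdne : (t ^ 2 + 16 * C ^ 2) ^ m ≠ 0 := pow_ne_zero m hpos.ne'
    field_simp
    ring
  refine ⟨⟨P, fun t ht => by rw [main t ht, hm, Real.rpow_natCast]⟩,
    fun t => P.eval t / (t ^ 2 + 16 * C ^ 2) ^ m, ?_, fun t ht => (main t ht).symm⟩
  apply ContDiff.div
  · exact contDiff_eval P
  · exact ((contDiff_id.pow 2).add contDiff_const).pow m
  · intro t
    positivity
end

section
/- Let n ≥ 4 be a natural number, let Λ, Λ₀, C be real constants with C > 0, and set σ(t) = t²/(16C) + C. If y : (0, ∞) → ℝ is differentiable and satisfies 2 y'(t) σ'(t) + 2 y(t) · ( (n−4) σ'(t)²/(2σ(t)) − 1/(4σ(t)) + σ''(t) ) − σ(t) Λ + Λ₀ = 0 for all t > 0, then there exists a real constant B such that y(t) = t · (t² + 16C²)^{−(n−2)/2} · ( B − ∫₁^t (16C² + s²)^{(n−2)/2} · (16C·Λ₀ − Λ·(16C² + s²)) / (4s²) ds ) for all t > 0. -/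
/-!
With `P t = t² + 16C²` one has `σ = P / (16C)`, and dividing by `2σ' = t / (4C)` turns the
equation into `y' + (2m t / P - 1/t) y = -(16CΛ₀ - ΛP) / (4t)` with `m = (n - 2)/2`. The
integrating factor `μ t = P^m / t` makes `(μ y)'` minus the integrand of formula (4.2), so the
fundamental theorem of calculus on `[1, t]` gives the formula with `B = μ 1 · y 1`.
-/

open Real Set intervalIntegral

lemma deriv_quadratic_sigma (C : ℝ) :
    deriv (fun t : ℝ => t ^ 2 / (16 * C) + C) = fun t => t / (8 * C) := by
  funext t
  refine (((hasDerivAt_pow 2 t).div_const (16 * C)).add_const C).deriv.trans ?_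
  ring

lemma HasDerivAt.mul_of_linear_ode {μ y : ℝ → ℝ} {t p q y' : ℝ}
    (hμ : HasDerivAt μ (μ t * p) t) (hy : HasDerivAt y y' t) (hode : y' + p * y t = q) :
    HasDerivAt (fun u => μ u * y u) (μ t * q) t :=
  (hμ.mul hy).congr_deriv (by rw [← hode]; ring)

lemma hasDerivAt_rpow_div_self {c m t : ℝ} (hc : 0 ≤ c) (ht : t ≠ 0) :
    HasDerivAt (fun u : ℝ => (u ^ 2 + c) ^ m / u)
      ((t ^ 2 + c) ^ m / t * (2 * m * t / (t ^ 2 + c) - 1 / t)) t := by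
  have hP : 0 < t ^ 2 + c := by positivity
  have hbase : HasDerivAt (fun u : ℝ => u ^ 2 + c) (2 * t) t := by
    simpa using (hasDerivAt_pow 2 t).add_const c
  refine ((hbase.rpow_const (p := m) (Or.inl hP.ne')).div (hasDerivAt_id' t) ht).congr_deriv ?_
  rw [rpow_sub_one hP.ne']
  field_simp

lemma ode_linear_form {n C Λ Λ₀ t y y' : ℝ} (hC : 0 < C) (ht : 0 < t)
    (hode : 2 * y' * (t / (8 * C))
        + 2 * y * ((n - 4) * (t / (8 * C)) ^ 2 / (2 * (t ^ 2 / (16 * C) + C))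
          - 1 / (4 * (t ^ 2 / (16 * C) + C)) + 1 / (8 * C))
        - (t ^ 2 / (16 * C) + C) * Λ + Λ₀ = 0) :
    y' + (2 * ((n - 2) / 2) * t / (t ^ 2 + 16 * C ^ 2) - 1 / t) * y
      = -(16 * C * Λ₀ - Λ * (16 * C ^ 2 + t ^ 2)) / (4 * t) := by
  rw [← sub_eq_zero, ← mul_eq_zero_iff_left (a := t / (4 * C)) (by positivity), ← hode]
  field_simp
  ring

lemma continuousOn_integrand (n C Λ Λ₀ : ℝ) :
    ContinuousOn (fun s : ℝ => (16 * C ^ 2 + s ^ 2) ^ ((n - 2) / 2) *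
      (16 * C * Λ₀ - Λ * (16 * C ^ 2 + s ^ 2)) / (4 * s ^ 2)) (Ioi 0) := by
  refine ContinuousOn.div ?_ (by fun_prop) fun s (hs : 0 < s) => by positivity
  refine ContinuousOn.mul ?_ (by fun_prop)
  have hbase : ContinuousOn (fun s : ℝ => 16 * C ^ 2 + s ^ 2) (Ioi 0) := by fun_prop
  exact hbase.rpow_const fun s (hs : 0 < s) => Or.inl (by positivity)

theorem stmt4_general (n : ℕ) (Λ Λ₀ C : ℝ) (hC : 0 < C)
    (σ : ℝ → ℝ) (hσ : ∀ t : ℝ, σ t = t ^ 2 / (16 * C) + C)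
    (y : ℝ → ℝ)
    (hy_diff : ∀ t : ℝ, 0 < t → DifferentiableAt ℝ y t)
    (hy_ode : ∀ t : ℝ, 0 < t →
      2 * deriv y t * deriv σ t
          + 2 * y t * (((n : ℝ) - 4) * (deriv σ t) ^ 2 / (2 * σ t)
              - 1 / (4 * σ t) + deriv (deriv σ) t)
          - σ t * Λ + Λ₀ = 0) :
    ∃ B : ℝ, ∀ t : ℝ, 0 < t →
      y t = t * (t ^ 2 + 16 * C ^ 2) ^ (-(((n : ℝ) - 2) / 2)) *
        (B - ∫ s in (1 : ℝ)..t,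
          (16 * C ^ 2 + s ^ 2) ^ (((n : ℝ) - 2) / 2) *
            (16 * C * Λ₀ - Λ * (16 * C ^ 2 + s ^ 2)) / (4 * s ^ 2)) := by
  obtain rfl : σ = fun t => t ^ 2 / (16 * C) + C := funext hσ
  set m : ℝ := ((n : ℝ) - 2) / 2
  set g := fun s : ℝ => (16 * C ^ 2 + s ^ 2) ^ m *
    (16 * C * Λ₀ - Λ * (16 * C ^ 2 + s ^ 2)) / (4 * s ^ 2)
  set μ := fun u : ℝ => (u ^ 2 + 16 * C ^ 2) ^ m / u
  have hμy : ∀ t ∈ Ioi (0 : ℝ), HasDerivAt (fun u => μ u * y u) (-g t) t := by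
    intro t (ht : 0 < t)
    have hode := ode_linear_form hC ht (by
      simpa only [deriv_quadratic_sigma, deriv_div_const, deriv_id''] using hy_ode t ht)
    refine ((hasDerivAt_rpow_div_self (by positivity) ht.ne').mul_of_linear_ode
      (hy_diff t ht).hasDerivAt hode).congr_deriv ?_
    simp only [g, add_comm (t ^ 2)]
    field_simp
    ring
  refine ⟨μ 1 * y 1, fun t ht => ?_⟩
  have hsub : uIcc 1 t ⊆ Ioi 0 := ordConnected_Ioi.uIcc_subset one_pos ht
  have hFTC : μ t * y t = μ 1 * y 1 - ∫ s in (1 : ℝ)..t, g s := by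
    have := integral_eq_sub_of_hasDerivAt (fun u hu => hμy u (hsub hu))
      ((continuousOn_integrand n C Λ Λ₀).neg.mono hsub).intervalIntegrable
    rw [intervalIntegral.integral_neg] at this
    linarith
  have hP : 0 < t ^ 2 + 16 * C ^ 2 := by positivity
  rw [← hFTC, rpow_neg hP.le]
  simp only [μ]
  field_simp

/-- Uniqueness part of the ODE analysis in Theorem 4.2: every solution on `(0,∞)`
of the linear ODE (4.27) with `σ(t) = t²/(16C) + C` is given by formula (4.2) for
some constant `B`. -/
theorem stmt4 (n : ℕ) (hn : 4 ≤ n) (Λ Λ₀ C : ℝ) (hC : 0 < C)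
    (σ : ℝ → ℝ) (hσ : ∀ t : ℝ, σ t = t ^ 2 / (16 * C) + C)
    (y : ℝ → ℝ)
    (hy_diff : ∀ t : ℝ, 0 < t → DifferentiableAt ℝ y t)
    (hy_ode : ∀ t : ℝ, 0 < t →
      2 * deriv y t * deriv σ t
          + 2 * y t * (((n : ℝ) - 4) * (deriv σ t) ^ 2 / (2 * σ t)
              - 1 / (4 * σ t) + deriv (deriv σ) t)
          - σ t * Λ + Λ₀ = 0) :
    ∃ B : ℝ, ∀ t : ℝ, 0 < t →
      y t = t * (t ^ 2 + 16 * C ^ 2) ^ (-(((n : ℝ) - 2) / 2)) *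
        (B - ∫ s in (1 : ℝ)..t,
          (16 * C ^ 2 + s ^ 2) ^ (((n : ℝ) - 2) / 2) *
            (16 * C * Λ₀ - Λ * (16 * C ^ 2 + s ^ 2)) / (4 * s ^ 2)) :=
  stmt4_general n Λ Λ₀ C hC σ hσ y hy_diff hy_ode
end

section
/- Let n ≥ 4 be a natural number, Λ, Λ₀ ∈ ℝ, and let σ, β : ℝ → ℝ be functions with σ three times differentiable, β twice differentiable, and σ(t) > 0 for all t. Assume that for all t ∈ ℝ: (a) 2 σ(t) σ''(t) = σ'(t)² + 1/4, and (b) 2 β'(t) σ'(t) + 2 β(t) · ( (n−4) σ'(t)²/(2σ(t)) − 1/(4σ(t)) + σ''(t) ) − σ(t) Λ + Λ₀ = 0. Then at every point t with σ'(t) ≠ 0 one has 2 β''(t) + (n−2) β'(t) σ'(t)/σ(t) + (n−2) β(t)/(4 σ(t)²) = Λ. -/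
/-!
Multiplied by `σ`, and with `σ''` eliminated by (a), equation (b) becomes the identity
`2 β' σ' σ + β ((n - 3) σ'² - 1/4) - σ² Λ + Λ₀ σ = 0` (`reducedEq`), valid for all `t`.
Differentiating it and eliminating `σ''` by (a) once more gives `σ σ'` times the second-order
equation, modulo the identity itself.
-/

section

variable (n Λ Λ₀ : ℝ)

noncomputable def reducedEq (s s' b b' : ℝ) : ℝ :=
  2 * b' * s' * s + b * ((n - 3) * s' ^ 2 - 1 / 4) - s ^ 2 * Λ + Λ₀ * s

theorem mul_eq_reducedEq {s s' s'' b b' : ℝ} (hs : s ≠ 0)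
    (ha : 2 * s * s'' = s' ^ 2 + 1 / 4) :
    s * (2 * b' * s' + 2 * b * ((n - 4) * s' ^ 2 / (2 * s) - 1 / (4 * s) + s'')
      - s * Λ + Λ₀) = reducedEq n Λ Λ₀ s s' b b' := by
  unfold reducedEq
  field_simp
  linear_combination 4 * b * ha

theorem mul_deriv_reducedEq {σ β : ℝ → ℝ} {t : ℝ}
    (hσ : DifferentiableAt ℝ σ t) (hσ' : DifferentiableAt ℝ (deriv σ) t)
    (hβ : DifferentiableAt ℝ β t) (hβ' : DifferentiableAt ℝ (deriv β) t)
    (hs : σ t ≠ 0) (ha : 2 * σ t * deriv (deriv σ) t = deriv σ t ^ 2 + 1 / 4) :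
    σ t * deriv (fun x => reducedEq n Λ Λ₀ (σ x) (deriv σ x) (β x) (deriv β x)) t
      = deriv σ t * (reducedEq n Λ Λ₀ (σ t) (deriv σ t) (β t) (deriv β t)
        + σ t ^ 2 * (2 * deriv (deriv β) t + (n - 2) * deriv β t * deriv σ t / σ t
          + (n - 2) * β t / (4 * σ t ^ 2) - Λ)) := by
  have hF : HasDerivAt (fun x => reducedEq n Λ Λ₀ (σ x) (deriv σ x) (β x) (deriv β x))
      (2 * deriv (deriv β) t * deriv σ t * σ t
        + 2 * deriv β t * deriv (deriv σ) t * σ t + 2 * deriv β t * deriv σ t * deriv σ t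
        + deriv β t * ((n - 3) * deriv σ t ^ 2 - 1 / 4)
        + β t * ((n - 3) * (2 * deriv σ t * deriv (deriv σ) t))
        - 2 * σ t * deriv σ t * Λ + Λ₀ * deriv σ t) t := by
    have h := (((((hβ'.hasDerivAt.const_mul 2).mul hσ'.hasDerivAt).mul hσ.hasDerivAt).add
      (hβ.hasDerivAt.mul (((hσ'.hasDerivAt.pow 2).const_mul (n - 3)).sub_const (1 / 4)))).sub
      ((hσ.hasDerivAt.pow 2).mul_const Λ)).add (hσ.hasDerivAt.const_mul Λ₀)
    exact h.congr_deriv (by simp only [Pi.mul_apply, Pi.pow_apply]; ring)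
  rw [hF.deriv]
  unfold reducedEq
  field_simp
  linear_combination (4 * σ t * deriv β t + 4 * (n - 3) * β t * deriv σ t) * ha

end

theorem stmt5_general (n : ℕ) (Λ Λ₀ : ℝ) (σ β : ℝ → ℝ)
    (hσ1 : Differentiable ℝ σ) (hσ2 : Differentiable ℝ (deriv σ))
    (hβ1 : Differentiable ℝ β) (hβ2 : Differentiable ℝ (deriv β))
    (hσpos : ∀ t : ℝ, 0 < σ t)
    (ha : ∀ t : ℝ, 2 * σ t * deriv (deriv σ) t = (deriv σ t) ^ 2 + 1 / 4)
    (hb : ∀ t : ℝ,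
      2 * deriv β t * deriv σ t
          + 2 * β t * (((n : ℝ) - 4) * (deriv σ t) ^ 2 / (2 * σ t)
              - 1 / (4 * σ t) + deriv (deriv σ) t)
          - σ t * Λ + Λ₀ = 0) :
    ∀ t : ℝ, deriv σ t ≠ 0 →
      2 * deriv (deriv β) t + ((n : ℝ) - 2) * deriv β t * deriv σ t / σ t
          + ((n : ℝ) - 2) * β t / (4 * (σ t) ^ 2) = Λ := by
  intro t hσ't
  have hF : (fun x => reducedEq n Λ Λ₀ (σ x) (deriv σ x) (β x) (deriv β x)) = fun _ => 0 := by
    ext x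
    rw [← mul_eq_reducedEq n Λ Λ₀ (hσpos x).ne' (ha x), hb x, mul_zero]
  have key := mul_deriv_reducedEq n Λ Λ₀ (hσ1 t) (hσ2 t) (hβ1 t) (hβ2 t) (hσpos t).ne' (ha t)
  rw [hF, deriv_const, congrFun hF t, zero_add, mul_zero, eq_comm] at key
  simpa only [mul_eq_zero, hσ't, pow_eq_zero_iff two_ne_zero, (hσpos t).ne', false_or,
    sub_eq_zero] using key

/-- Reduction in the proof of Theorem 4.2: equations (4.24-bis) and (4.20-ter)
imply the second-order equation (4.23-bis) at every point where `σ' ≠ 0`. -/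
theorem stmt5 (n : ℕ) (hn : 4 ≤ n) (Λ Λ₀ : ℝ) (σ β : ℝ → ℝ)
    (hσ1 : Differentiable ℝ σ) (hσ2 : Differentiable ℝ (deriv σ))
    (hσ3 : Differentiable ℝ (deriv (deriv σ)))
    (hβ1 : Differentiable ℝ β) (hβ2 : Differentiable ℝ (deriv β))
    (hσpos : ∀ t : ℝ, 0 < σ t)
    (ha : ∀ t : ℝ, 2 * σ t * deriv (deriv σ) t = (deriv σ t) ^ 2 + 1 / 4)
    (hb : ∀ t : ℝ,
      2 * deriv β t * deriv σ t
          + 2 * β t * (((n : ℝ) - 4) * (deriv σ t) ^ 2 / (2 * σ t)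
              - 1 / (4 * σ t) + deriv (deriv σ) t)
          - σ t * Λ + Λ₀ = 0) :
    ∀ t : ℝ, deriv σ t ≠ 0 →
      2 * deriv (deriv β) t + ((n : ℝ) - 2) * deriv β t * deriv σ t / σ t
          + ((n : ℝ) - 2) * β t / (4 * (σ t) ^ 2) = Λ :=
  stmt5_general n Λ Λ₀ σ β hσ1 hσ2 hβ1 hβ2 hσpos ha hb
end

section
/- Let V be a finite-dimensional real vector space with a direct sum decomposition V = ℝp ⊕ W' ⊕ ℝq, where p, q are nonzero vectors, and let h be a positive definite symmetric bilinear form on the subspace W'. Let p*, q* ∈ V* be the linear functionals with p*(p) = 1, p* vanishing on W' ⊕ ℝq, q*(q) = 1, q* vanishing on ℝp ⊕ W', and let h̃ be the symmetric bilinear form on V given by h̃(x, y) = h(πx, πy), where π : V → W' is the projection associated with the decomposition. Fix a real number σ > 0. Then a symmetric bilinear form g on V is nondegenerate with g(p,p) = 0, {x ∈ V : g(p,x) = 0} = ℝp ⊕ W', and g(w,w') = σ h(w,w') for all w, w' ∈ W', if and only if g = σ h̃ + 2 q* ∨ ϖ for some linear functional ϖ ∈ V* with ϖ(p) ≠ 0.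 -/
/-- Pointwise content of the Corollary after Theorem 2.6 (formula (2.8)): given the
decomposition `V = ℝp ⊕ W' ⊕ ℝq` and a positive definite form `h` on `W'`, a
symmetric bilinear form `g` is nondegenerate with `g(p,p)=0`, `p^⊥ = ℝp ⊕ W'` and
`g|_{W'} = σ h` if and only if `g = σ h̃ + 2 q* ∨ ϖ` for some functional `ϖ` with
`ϖ(p) ≠ 0`. -/
theorem stmt9 (V : Type*) [AddCommGroup V] [Module ℝ V] [FiniteDimensional ℝ V]
    (p q : V) (hp : p ≠ 0) (hq : q ≠ 0)
    (W' : Submodule ℝ V)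
    (hspan : Submodule.span ℝ {p} ⊔ W' ⊔ Submodule.span ℝ {q} = ⊤)
    (π : V →ₗ[ℝ] V) (ps qs : V →ₗ[ℝ] ℝ)
    (hπW : ∀ x : V, π x ∈ W') (hπp : π p = 0) (hπq : π q = 0)
    (hπw : ∀ w ∈ W', π w = w)
    (hpsp : ps p = 1) (hpsq : ps q = 0) (hpsw : ∀ w ∈ W', ps w = 0)
    (hqsq : qs q = 1) (hqsp : qs p = 0) (hqsw : ∀ w ∈ W', qs w = 0)
    (h : V →ₗ[ℝ] V →ₗ[ℝ] ℝ)
    (hsymm : ∀ w ∈ W', ∀ w' ∈ W', h w w' = h w' w)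
    (hpos : ∀ w ∈ W', w ≠ 0 → 0 < h w w)
    (σ : ℝ) (hσ : 0 < σ)
    (g : V →ₗ[ℝ] V →ₗ[ℝ] ℝ) (hg_symm : ∀ x y : V, g x y = g y x) :
    ((∀ x : V, (∀ y : V, g x y = 0) → x = 0) ∧
      g p p = 0 ∧
      (∀ x : V, g p x = 0 ↔ x ∈ Submodule.span ℝ {p} ⊔ W') ∧
      (∀ w ∈ W', ∀ w' ∈ W', g w w' = σ * h w w')) ↔
    ∃ ϖ : V →ₗ[ℝ] ℝ, ϖ p ≠ 0 ∧
      ∀ x y : V, g x y = σ * h (π x) (π y) + (qs x * ϖ y + ϖ x * qs y) := by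
  -- decomposition lemma
  have hdec : ∀ x : V, ps x • p + π x + qs x • q = x := by
    intro x
    have hker : Submodule.span ℝ {p} ⊔ W' ⊔ Submodule.span ℝ {q} ≤
        LinearMap.ker ((ps.smulRight p + π + qs.smulRight q) - LinearMap.id) := by
      refine sup_le (sup_le ?_ ?_) ?_
      · rw [Submodule.span_le]
        intro z hz
        simp only [Set.mem_singleton_iff] at hz
        subst hz
        simp [LinearMap.mem_ker, hpsp, hqsp, hπp]
      · intro w hw
        simp [LinearMap.mem_ker, hpsw w hw, hqsw w hw, hπw w hw]
      · rw [Submodule.span_le]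
        intro z hz
        simp only [Set.mem_singleton_iff] at hz
        subst hz
        simp [LinearMap.mem_ker, hpsq, hqsq, hπq]
    rw [hspan] at hker
    have := hker (Submodule.mem_top : x ∈ ⊤)
    simp only [LinearMap.mem_ker, LinearMap.sub_apply, LinearMap.add_apply,
      LinearMap.smulRight_apply, LinearMap.id_apply, sub_eq_zero] at this
    exact this
  have hqs0 : ∀ x ∈ Submodule.span ℝ {p} ⊔ W', qs x = 0 := by
    intro x hx
    obtain ⟨y, hy, z, hz, rfl⟩ := Submodule.mem_sup.mp hx
    obtain ⟨c, rfl⟩ := Submodule.mem_span_singleton.mp hy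
    simp [hqsp, hqsw z hz]
  constructor
  · rintro ⟨hnd, hgpp, hgperp, hgW⟩
    have hgpw : ∀ w ∈ W', g p w = 0 := fun w hw =>
      (hgperp w).mpr (Submodule.mem_sup_right hw)
    have hgpq : g p q ≠ 0 := by
      intro h0
      have := hqs0 q ((hgperp q).mp h0)
      rw [hqsq] at this; exact one_ne_zero this
    refine ⟨g q - (g q q / 2) • qs, ?_, ?_⟩
    · simp only [LinearMap.sub_apply, LinearMap.smul_apply, smul_eq_mul, hqsp, mul_zero,
        sub_zero]
      rw [← hg_symm p q]; exact hgpq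
    · have hgq : ∀ z : V, g q z = ps z * g q p + g q (π z) + qs z * g q q := by
        intro z
        conv_lhs => rw [← hdec z]
        simp only [map_add, map_smul, smul_eq_mul]
      intro x y
      have h1 : g p (π y) = 0 := hgpw _ (hπW y)
      have h2 : g (π x) p = 0 := by rw [hg_symm]; exact hgpw _ (hπW x)
      have h3 : g (π x) (π y) = σ * h (π x) (π y) := hgW _ (hπW x) _ (hπW y)
      have h4 : g (π x) q = g q (π x) := hg_symm _ _
      conv_lhs => rw [← hdec x, ← hdec y]
      simp only [map_add, map_smul, LinearMap.add_apply, LinearMap.smul_apply, smul_eq_mul,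
        LinearMap.sub_apply]
      rw [hgpp, h1, h2, h3, h4]
      simp only [hg_symm p q]
      rw [hgq x, hgq y]
      ring
  · rintro ⟨ϖ, hϖp, hform⟩
    have hgp : ∀ y : V, g p y = ϖ p * qs y := by
      intro y
      rw [hform]
      simp [hπp, hqsp]
    refine ⟨?_, ?_, ?_, ?_⟩
    · intro x hx
      have h1 : qs x = 0 := by
        have := hx p
        rw [hg_symm, hgp] at this
        exact (mul_eq_zero.mp this).resolve_left hϖp
      have h2 : ϖ x = 0 := by
        have := hx q
        rw [hform] at this
        simpa [hπq, hqsq, h1] using this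
      have h3 : π x = 0 := by
        by_contra hne
        have := hx (π x)
        rw [hform, hπw _ (hπW x), hqsw _ (hπW x), h1] at this
        simp only [mul_zero, zero_mul, add_zero, zero_add] at this
        have hpos' := hpos _ (hπW x) hne
        nlinarith
      have hx0 : x = ps x • p := by
        have := hdec x
        rw [h1, h3] at this
        simpa using this.symm
      have : ps x = 0 := by
        have := h2
        rw [hx0] at this
        simp only [map_smul, smul_eq_mul] at this
        exact (mul_eq_zero.mp this).resolve_right hϖp
      rw [hx0, this, zero_smul]
    · rw [hform]; simp [hπp, hqsp]
    · intro x
      rw [hgp]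
      constructor
      · intro h0
        have hq0 : qs x = 0 := (mul_eq_zero.mp h0).resolve_left hϖp
        have := hdec x
        rw [hq0, zero_smul, add_zero] at this
        rw [← this]
        exact Submodule.add_mem _
          (Submodule.mem_sup_left (Submodule.smul_mem _ _ (Submodule.mem_span_singleton_self p)))
          (Submodule.mem_sup_right (hπW x))
      · intro hx
        rw [hqs0 x hx, mul_zero]
    · intro w hw w' hw'
      rw [hform, hπw w hw, hπw w' hw', hqsw w hw, hqsw w' hw']
      ring
end

section
/- Let V be a real vector space, φ : V → ℝ a nonzero linear functional, W = ker φ, and S a symmetric bilinear form on V. Then S(w, w') = 0 for all w, w' ∈ W if and only if there exists a linear functional η : V → ℝ with S = φ ∨ η; moreover such η is unique. -/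
/-- Linear-algebra decomposition underlying Lemma 1.1: a symmetric bilinear form
`S` vanishes on all pairs of vectors of the hyperplane `W = ker φ` iff
`S = φ ∨ η` for some (unique) linear functional `η`. -/
theorem stmt10 (V : Type*) [AddCommGroup V] [Module ℝ V]
    (φ : V →ₗ[ℝ] ℝ) (hφ : φ ≠ 0)
    (S : V →ₗ[ℝ] V →ₗ[ℝ] ℝ) (hS_symm : ∀ x y : V, S x y = S y x) :
    ((∀ w : V, φ w = 0 → ∀ w' : V, φ w' = 0 → S w w' = 0) ↔
      ∃ η : V →ₗ[ℝ] ℝ, ∀ x y : V, S x y = (φ x * η y + η x * φ y) / 2) ∧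
    (∀ η₁ η₂ : V →ₗ[ℝ] ℝ,
      (∀ x y : V, S x y = (φ x * η₁ y + η₁ x * φ y) / 2) →
      (∀ x y : V, S x y = (φ x * η₂ y + η₂ x * φ y) / 2) → η₁ = η₂) := by
  obtain ⟨v0, hv0⟩ : ∃ v, φ v ≠ 0 := by
    by_contra h
    push_neg at h
    exact hφ (LinearMap.ext fun x => h x)
  set v : V := (φ v0)⁻¹ • v0 with hv_def
  have hv : φ v = 1 := by
    simp [hv_def, inv_mul_cancel₀ hv0]
  constructor
  · constructor
    · intro h
      refine ⟨(2 : ℝ) • S v - (S v v) • φ, fun x y => ?_⟩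
      have hx : φ (x - φ x • v) = 0 := by simp [hv]
      have hy : φ (y - φ y • v) = 0 := by simp [hv]
      have key := h _ hx _ hy
      have hxv : S x v = S v x := hS_symm x v
      simp only [map_sub, map_smul, LinearMap.sub_apply, LinearMap.smul_apply,
        smul_eq_mul] at key ⊢
      rw [hxv] at key
      linear_combination key
    · rintro ⟨η, hη⟩ w hw w' hw'
      rw [hη, hw, hw']
      ring
  · intro η₁ η₂ h1 h2
    have key : ∀ x y : V, φ x * (η₁ y - η₂ y) + (η₁ x - η₂ x) * φ y = 0 := by
      intro x y
      have := (h1 x y).symm.trans (h2 x y)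
      nlinarith [this]
    have hvv : η₁ v = η₂ v := by
      have := key v v
      rw [hv] at this
      linarith
    ext y
    have := key v y
    rw [hv, hvv] at this
    nlinarith [this]
end
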